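/- arXiv:2103.06624 — 2 statements merged into one kernel-verified Lean document; each statement's English description precedes it below -/
import Mathlib

section
/- Let w, v ∈ ℝ^d with l ≤ v ≤ u componentwise. Define a diagonal matrix D with D_{jj} = 1 if l_j ≥ 0; D_{jj} = 0 if u_j ≤ 0; D_{jj} = α_j (any fixed α_j ∈ [0,1]) if u_j > 0 > l_j and w_j ≥ 0; D_{jj} = u_j/(u_j − l_j) if u_j > 0 > l_j and w_j < 0. Define b_j = −u_j l_j/(u_j − l_j) if u_j > 0 > l_j and w_j < 0, and b_j = 0 otherwise. Then ∑_j w_j · max(0, v_j) ≥ ∑_j w_j (D_{jj} v_j + b_j). -/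
/-!
The bound holds neuron by neuron. On a stable neuron (`0 ≤ l` or `u ≤ 0`) ReLU is linear on
`[l, u]`. On an unstable one, ReLU lies above each line `v ↦ α v` with `α ∈ [0, 1]` and below
its chord over `[l, u]`; the sign of `w` decides which of the two bounds is multiplied by `w`.
-/

theorem mul_le_max_zero {a x : ℝ} (ha₀ : 0 ≤ a) (ha₁ : a ≤ 1) : a * x ≤ max 0 x := by
  rcases le_total 0 x with hx | hx
  · exact (mul_le_of_le_one_left hx ha₁).trans (le_max_right 0 x)
  · exact (mul_nonpos_of_nonneg_of_nonpos ha₀ hx).trans (le_max_left 0 x)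

theorem max_zero_le_chord {l u x : ℝ} (hl : l < 0) (hu : 0 < u) (hlx : l ≤ x) (hxu : x ≤ u) :
    max 0 x ≤ u / (u - l) * x + -(u * l) / (u - l) := by
  have hul : 0 < u - l := by linarith
  rw [div_mul_eq_mul_div, ← add_div, le_div_iff₀ hul, max_mul_of_nonneg _ _ hul.le, zero_mul]
  apply max_le <;> nlinarith

theorem relu_relaxation_single {w v l u α D b : ℝ} (hlv : l ≤ v) (hvu : v ≤ u)
    (hα : 0 ≤ α ∧ α ≤ 1)
    (hD1 : 0 ≤ l → D = 1)
    (hD0 : u ≤ 0 → D = 0)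
    (hDα : u > 0 → 0 > l → 0 ≤ w → D = α)
    (hDu : u > 0 → 0 > l → w < 0 → D = u / (u - l))
    (hb1 : u > 0 → 0 > l → w < 0 → b = -(u * l) / (u - l))
    (hb0 : ¬(u > 0 ∧ 0 > l ∧ w < 0) → b = 0) :
    w * (D * v + b) ≤ w * max 0 v := by
  rcases le_or_gt 0 l with hl | hl
  · rw [hD1 hl, hb0 fun h => (not_le.2 h.2.1) hl, max_eq_right (hl.trans hlv), one_mul, add_zero]
  rcases le_or_gt u 0 with hu | hu
  · rw [hD0 hu, hb0 fun h => (not_le.2 h.1) hu, max_eq_left (hvu.trans hu)]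
    simp
  rcases le_or_gt 0 w with hw | hw
  · rw [hDα hu hl hw, hb0 fun h => (not_le.2 h.2.2) hw, add_zero]
    exact mul_le_mul_of_nonneg_left (mul_le_max_zero hα.1 hα.2) hw
  · rw [hDu hu hl hw, hb1 hu hl hw]
    exact mul_le_mul_of_nonpos_left (max_zero_le_chord hl hu hlv hvu) hw.le

/-- Lemma 2.1 (CROWN ReLU layer relaxation). -/
theorem crown_relu_layer_relaxation (d : ℕ) (w v l u α D b : Fin d → ℝ)
    (hlv : ∀ j, l j ≤ v j) (hvu : ∀ j, v j ≤ u j)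
    (hα : ∀ j, 0 ≤ α j ∧ α j ≤ 1)
    (hD1 : ∀ j, 0 ≤ l j → D j = 1)
    (hD0 : ∀ j, u j ≤ 0 → D j = 0)
    (hDα : ∀ j, u j > 0 → 0 > l j → 0 ≤ w j → D j = α j)
    (hDu : ∀ j, u j > 0 → 0 > l j → w j < 0 → D j = u j / (u j - l j))
    (hb1 : ∀ j, u j > 0 → 0 > l j → w j < 0 → b j = -(u j * l j) / (u j - l j))
    (hb0 : ∀ j, ¬(u j > 0 ∧ 0 > l j ∧ w j < 0) → b j = 0) :
    ∑ j, w j * max 0 (v j) ≥ ∑ j, w j * (D j * v j + b j) := by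
  exact Finset.sum_le_sum fun j _ => relu_relaxation_single (hlv j) (hvu j) (hα j) (hD1 j)
    (hD0 j) (hDα j) (hDu j) (hb1 j) (hb0 j)
end

section
/- Closed-form recursion identity: with Â^{(i)}_{(i)} = I and Â^{(k+1)}_{(i)} = W^{(k+1)} D^{(k)} Â^{(k)}_{(i)}, and A^{(i)} defined by A^{(L−1)} = W^{(L)}, A^{(i)} = (A^{(i+1)} D^{(i+1)} + β^{(i+1)⊤} S^{(i+1)}) W^{(i+1)}, one has A^{(0)} = Â^{(L)}_{(1)} W^{(1)} + ∑_{i=1}^{L−1} β^{(i)⊤} S^{(i)} Â^{(i)}_{(1)} W^{(1)}. -/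
/-- Lemma A.2: the final β-CROWN coefficient equals the CROWN term plus a
linear-in-β correction. -/
theorem beta_crown_A0_closed_form (L : ℕ) (hL : 2 ≤ L) (d : ℕ → ℕ)
    (W : ∀ i, Matrix (Fin (d i)) (Fin (d (i - 1))) ℝ)
    (D S : ∀ i, Matrix (Fin (d i)) (Fin (d i)) ℝ)
    (β : ∀ i, Matrix (Fin (d L)) (Fin (d i)) ℝ)
    (A : ∀ i, Matrix (Fin (d L)) (Fin (d i)) ℝ)
    (Ahat : ∀ k i, Matrix (Fin (d k)) (Fin (d i)) ℝ)
    (hAhat0 : ∀ i, Ahat i i = 1)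
    (hAhatS : ∀ k i, Ahat (k + 1) i = W (k + 1) * (D (k + 1 - 1) * Ahat (k + 1 - 1) i))
    (hAL : A (L - 1) = W L)
    (hArec : ∀ i, i + 1 ≤ L - 1 →
      A i = (A (i + 1) * D (i + 1) + β (i + 1) * S (i + 1)) * W (i + 1)) :
    A 0 = Ahat L 1 * W 1 + ∑ i ∈ Finset.Icc 1 (L - 1), β i * (S i * (Ahat i 1 * W 1)) := by
  -- a subtraction-free version of W
  set W' : ∀ k, Matrix (Fin (d (k + 1))) (Fin (d k)) ℝ :=
    fun k => (W (k + 1) : Matrix (Fin (d (k + 1))) (Fin (d k)) ℝ) with hW'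
  have hAhatS' : ∀ k i, Ahat (k + 1) i = W' k * (D k * Ahat k i) := by
    intro k i
    have h := hAhatS k i
    simpa using h
  -- key: shifting the second index down
  have hstep : ∀ j k, j + 1 + 1 ≤ k →
      Ahat k (j + 1 + 1) * (W' (j + 1) * D (j + 1)) = Ahat k (j + 1) := by
    intro j k hk
    induction k, hk using Nat.le_induction with
    | base =>
        have h1 : Ahat (j + 1 + 1) (j + 1) = W' (j + 1) * D (j + 1) := by
          have h := hAhatS' (j + 1) (j + 1)
          rw [hAhat0] at h
          simpa [Matrix.mul_one] using h
        rw [hAhat0, Matrix.one_mul, h1]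
    | succ k hk ih =>
        rw [hAhatS' k (j + 1 + 1), hAhatS' k (j + 1), Matrix.mul_assoc, Matrix.mul_assoc, ih]
  have main : ∀ t j, j + 1 + t = L →
      A j = Ahat L (j + 1) * W' j +
        ∑ i ∈ Finset.Icc (j + 1) (L - 1), β i * (S i * (Ahat i (j + 1) * W' j)) := by
    intro t
    induction t with
    | zero =>
        intro j hj
        have hj' : L = j + 1 := by omega
        subst hj'
        have hAj : A j = W' j := hAL
        rw [hAj, hAhat0, Matrix.one_mul, Finset.Icc_eq_empty (by omega), Finset.sum_empty,
          add_zero]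
    | succ t ih =>
        intro j hj
        have hj1 : j + 1 ≤ L - 1 := by omega
        have hIH := ih (j + 1) (by omega)
        have hArecW : A j = (A (j + 1) * D (j + 1) + β (j + 1) * S (j + 1)) * W' j :=
          hArec j hj1
        rw [hArecW, hIH]
        have hins : Finset.Icc (j + 1) (L - 1)
            = insert (j + 1) (Finset.Icc (j + 1 + 1) (L - 1)) := by
          ext x
          simp only [Finset.mem_Icc, Finset.mem_insert]
          omega
        rw [hins, Finset.sum_insert (by simp [Finset.mem_Icc])]
        rw [hAhat0, Matrix.one_mul]
        simp only [Matrix.add_mul, Matrix.sum_mul]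
        have hterm : ∀ i ∈ Finset.Icc (j + 1 + 1) (L - 1),
            β i * (S i * (Ahat i (j + 1 + 1) * W' (j + 1))) * D (j + 1) * W' j
              = β i * (S i * (Ahat i (j + 1) * W' j)) := by
          intro i hi
          have hi2 : j + 1 + 1 ≤ i := (Finset.mem_Icc.mp hi).1
          rw [← hstep j i hi2]
          simp only [Matrix.mul_assoc]
        rw [Finset.sum_congr rfl hterm]
        have hmain : Ahat L (j + 1 + 1) * W' (j + 1) * D (j + 1) * W' j
            = Ahat L (j + 1) * W' j := by
          rw [← hstep j L (by omega)]
          simp only [Matrix.mul_assoc]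
        rw [hmain]
        simp only [Matrix.mul_assoc]
        abel
  have h0 := main (L - 1) 0 (by omega)
  simpa using h0
end
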